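/- arXiv:2004.07409 — 7 statements merged into one kernel-verified Lean document; each statement's English description precedes it below -/
import Mathlib

section
/- The relation x ⤳ y is invariant under the group action: for any Polish G-space X, any x, y ∈ X, and any g, h ∈ G, if x ⤳ y then gx ⤳ hy. -/
def Unbal (G : Type*) {X : Type*} [Group G] [TopologicalSpace G] [TopologicalSpace X]
    [MulAction G X] (x y : X) : Prop :=
  ∀ V : Set G, IsOpen V → (1 : G) ∈ V →
    ∀ U : Set X, IsOpen U → (x ∈ U ∨ y ∈ U) →
      ∃ gx gy : G, gx • x ∈ U ∧ gy • y ∈ U ∧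
        gy • y ∈ closure ((fun v : G => v • (gx • x)) '' V) ∧
        gx • x ∈ closure ((fun v : G => v • (gy • y)) '' V)

def BF (G : Type*) {X : Type*} [Group G] [TopologicalSpace G] [TopologicalSpace X]
    [MulAction G X] (α : Ordinal) (V : Set G) (x y : X) : Prop :=
  if α = 0 then x ∈ closure ((fun v : G => v • y) '' V)
  else ∀ W : Set G, IsOpen W → (1 : G) ∈ W →
    ∃ v ∈ V, ∀ β : Ordinal, β < α → BF G β W (v • y) x
termination_by α

def IsPiClass {X : Type*} [TopologicalSpace X] (α : Ordinal) (A : Set X) : Prop :=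
  IsClosed A ∨ ∃ f : ℕ → Set X, A = ⋂ n, f n ∧ ∀ n, ∃ (β : Ordinal) (_ : β < α), IsPiClass β (f n)ᶜ
termination_by α

def VaughtStar (G : Type*) {X : Type*} [Group G] [TopologicalSpace G] [TopologicalSpace X]
    [MulAction G X] (A : Set X) (V : Set G) : Set X :=
  {x | IsMeagre {g ∈ V | g • x ∉ A}}

def VaughtDelta (G : Type*) {X : Type*} [Group G] [TopologicalSpace G] [TopologicalSpace X]
    [MulAction G X] (A : Set X) (V : Set G) : Set X :=
  {x | ¬ IsMeagre {g ∈ V | g • x ∈ A}}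

def IsTSI (H : Type*) [Group H] [tH : TopologicalSpace H] : Prop :=
  ∃ m : MetricSpace H, m.toUniformSpace.toTopologicalSpace = tH ∧
    (∀ g h h' : H, m.dist (g * h) (g * h') = m.dist h h') ∧
    (∀ g h h' : H, m.dist (h * g) (h' * g) = m.dist h h')

def IsCLI (H : Type*) [Group H] [tH : TopologicalSpace H] : Prop :=
  ∃ m : MetricSpace H, m.toUniformSpace.toTopologicalSpace = tH ∧
    (∀ g h h' : H, m.dist (g * h) (g * h') = m.dist h h') ∧
    @CompleteSpace H m.toUniformSpace

def BaireMeas {X Y : Type*} [TopologicalSpace X] [TopologicalSpace Y] (f : X → Y) : Prop :=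
  ∀ U : Set Y, IsOpen U → ∃ V : Set X, IsOpen V ∧ IsMeagre (symmDiff (f ⁻¹' U) V)

/-! The witnesses `gx, gy` in `Unbal G x y` are arbitrary, so for fixed `V, U` the witness
condition `UnbalAt G V U x y` survives translating `x` and `y` independently. Only the requirement
that `U` meet `{x, y}` ties the pair to its position; translating both points by one `k` is
absorbed by pulling `U` back along `k` and `V` back along conjugation by `k`. For `g • x, h • y`
take `k = g` or `k = h`, whichever point lies in `U`, and then retranslate the other one. -/

def UnbalAt (G : Type*) {X : Type*} [Group G] [TopologicalSpace X] [MulAction G X]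
    (V : Set G) (U : Set X) (x y : X) : Prop :=
  ∃ gx gy : G, gx • x ∈ U ∧ gy • y ∈ U ∧
    gy • y ∈ closure ((fun v : G => v • (gx • x)) '' V) ∧
    gx • x ∈ closure ((fun v : G => v • (gy • y)) '' V)

section

open Set

variable {G X : Type*} [Group G] [TopologicalSpace X] [MulAction G X]

theorem UnbalAt.smul_smul {V : Set G} {U : Set X} {x y : X} (a b : G)
    (hxy : UnbalAt G V U x y) : UnbalAt G V U (a • x) (b • y) := by
  obtain ⟨gx, gy, hxU, hyU, hy, hx⟩ := hxy
  refine ⟨gx * a⁻¹, gy * b⁻¹, ?_⟩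
  simpa only [mul_smul, inv_smul_smul] using ⟨hxU, hyU, hy, hx⟩

theorem smul_mem_closure_image_smul_of_mapsTo_conj [ContinuousConstSMul G X] {W V : Set G}
    {p q : X} (k : G) (hWV : MapsTo (fun w => k * w * k⁻¹) W V)
    (hq : q ∈ closure ((fun w : G => w • p) '' W)) :
    k • q ∈ closure ((fun v : G => v • (k • p)) '' V) := by
  refine closure_mono ?_ (smul_closure_subset k _ (smul_mem_smul_set hq))
  rintro _ ⟨_, ⟨w, hw, rfl⟩, rfl⟩
  exact ⟨k * w * k⁻¹, hWV hw, by simp only [mul_smul, inv_smul_smul]⟩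

theorem UnbalAt.smul_of_conj [ContinuousConstSMul G X] {V : Set G} {U : Set X} {x y : X}
    (k : G) (hxy : UnbalAt G ((fun w => k * w * k⁻¹) ⁻¹' V) ((k • ·) ⁻¹' U) x y) :
    UnbalAt G V U (k • x) (k • y) := by
  obtain ⟨gx, gy, hxU, hyU, hy, hx⟩ := hxy
  have hconj (g : G) (z : X) : (k * g * k⁻¹) • (k • z) = k • g • z := by
    simp only [mul_smul, inv_smul_smul]
  refine ⟨k * gx * k⁻¹, k * gy * k⁻¹, ?_⟩
  simp only [hconj]
  exact ⟨hxU, hyU, smul_mem_closure_image_smul_of_mapsTo_conj k (mapsTo_preimage _ _) hy,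
    smul_mem_closure_image_smul_of_mapsTo_conj k (mapsTo_preimage _ _) hx⟩

theorem Unbal.smul [TopologicalSpace G] [SeparatelyContinuousMul G] [ContinuousConstSMul G X]
    {x y : X} (hxy : Unbal G x y) (k : G) : Unbal G (k • x) (k • y) := by
  intro V hV hV1 U hU hxyU
  have hV1' : (1 : G) ∈ (fun w => k * w * k⁻¹) ⁻¹' V := by
    simpa only [mem_preimage, mul_one, mul_inv_cancel] using hV1
  exact UnbalAt.smul_of_conj k (hxy _ (hV.preimage (IsTopologicalGroup.continuous_conj k)) hV1' _
    (hU.preimage (continuous_const_smul k)) hxyU)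

end

theorem stmt0_general {G : Type*} {X : Type*} [Group G] [TopologicalSpace G] [IsTopologicalGroup G]
    [TopologicalSpace X] [MulAction G X] [ContinuousSMul G X]
    (x y : X) (g h : G) (hxy : Unbal G x y) :
    Unbal G (g • x) (h • y) := by
  intro V hV hV1 U hU hU1
  show UnbalAt G V U (g • x) (h • y)
  rcases hU1 with hgx | hhy
  · simpa only [one_smul, mul_smul, inv_smul_smul] using
      UnbalAt.smul_smul 1 (h * g⁻¹) ((hxy.smul g) V hV hV1 U hU (Or.inl hgx))
  · simpa only [one_smul, mul_smul, inv_smul_smul] using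
      UnbalAt.smul_smul (g * h⁻¹) 1 ((hxy.smul h) V hV hV1 U hU (Or.inr hhy))

theorem stmt0 {G : Type*} {X : Type*} [Group G] [TopologicalSpace G] [IsTopologicalGroup G]
    [PolishSpace G] [TopologicalSpace X] [PolishSpace X] [MulAction G X] [ContinuousSMul G X]
    (x y : X) (g h : G) (hxy : Unbal G x y) :
    Unbal G (g • x) (h • y) :=
  stmt0_general x y g h hxy
end

section
/- If x ⤳ y, then for every open neighborhood V of the identity of G and every nonempty open set U ⊆ X containing x or y, the set of g^x ∈ G such that there exists g^y ∈ G with g^x·x, g^y·y ∈ U, g^y·y ∈ closure(V·(g^x·x)), and g^x·x ∈ closure(V·(g^y·y)), is nonmeager in G. -/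
open Pointwise Set Topology

/-!
The witnesses for `x ⤳ y` at a small identity neighbourhood `N` with `N * N ⊆ V` stay witnesses
at `V` after translating `gx` on the left by any `w ∈ N ∩ N⁻¹` with `(w * gx) • x ∈ U`: the
factor `w` is absorbed into `V` on both sides. So the set of witnesses at `V` has nonempty interior,
and is nonmeagre since `G` is a Baire space.
-/

section Witnesses

variable {G X : Type*} [Group G] [MulAction G X]

lemma image_smul_smul_subset_of_mul_subset {A B C : Set G} (h : A * B ⊆ C) {b : G} (hb : b ∈ B)
    (z : X) : (fun v : G => v • b • z) '' A ⊆ (fun v : G => v • z) '' C := by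
  rintro _ ⟨a, ha, rfl⟩
  exact ⟨a * b, h (mul_mem_mul ha hb), mul_smul a b z⟩

lemma mapsTo_smul_image_smul_of_mul_subset {A B C : Set G} (h : A * B ⊆ C) {a : G} (ha : a ∈ A)
    (z : X) : MapsTo (a • ·) ((fun v : G => v • z) '' B) ((fun v : G => v • z) '' C) := by
  rintro _ ⟨b, hb, rfl⟩
  exact ⟨a * b, h (mul_mem_mul ha hb), mul_smul a b z⟩

variable [TopologicalSpace X]

def unbalWitnesses (V : Set G) (U : Set X) (x y : X) : Set G :=
  {gx | ∃ gy : G, gx • x ∈ U ∧ gy • y ∈ U ∧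
    gy • y ∈ closure ((fun v : G => v • (gx • x)) '' V) ∧
    gx • x ∈ closure ((fun v : G => v • (gy • y)) '' V)}

lemma mul_mem_unbalWitnesses [ContinuousConstSMul G X] {N V : Set G} (hNV : N * N ⊆ V)
    {U : Set X} {x y : X} {gx w : G} (hgx : gx ∈ unbalWitnesses N U x y) (hw : w ∈ N)
    (hw_inv : w⁻¹ ∈ N) (hwU : (w * gx) • x ∈ U) : w * gx ∈ unbalWitnesses V U x y := by
  obtain ⟨gy, -, hgyU, hy, hx⟩ := hgx
  refine ⟨gy, hwU, hgyU, closure_mono ?_ hy, ?_⟩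
  · rw [show gx • x = w⁻¹ • (w * gx) • x by rw [mul_smul, inv_smul_smul]]
    exact image_smul_smul_subset_of_mul_subset hNV hw_inv _
  · rw [mul_smul]
    exact map_mem_closure (continuous_const_smul w) hx
      (mapsTo_smul_image_smul_of_mul_subset hNV hw _)

lemma Unbal.interior_unbalWitnesses_nonempty [TopologicalSpace G] [IsTopologicalGroup G]
    [ContinuousSMul G X] {x y : X} (hxy : Unbal G x y) {V : Set G} (hV : V ∈ 𝓝 1) {U : Set X} (hU : IsOpen U)
    (hmem : x ∈ U ∨ y ∈ U) : (interior (unbalWitnesses V U x y)).Nonempty := by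
  obtain ⟨N, hN, h1N, hNV⟩ := exists_open_nhds_one_mul_subset hV
  obtain ⟨gx, gy, hgxU, hgyU, hy, hx⟩ := hxy N hN h1N U hU hmem
  refine ⟨gx, mem_interior_iff_mem_nhds.2 ?_⟩
  rw [← map_mul_right_nhds_one gx, Filter.mem_map]
  have hU_near : ∀ᶠ w in 𝓝 (1 : G), (w * gx) • x ∈ U :=
    ((continuous_mul_const gx).smul continuous_const).continuousAt.preimage_mem_nhds
      (by simpa using hU.mem_nhds hgxU)
  filter_upwards [hN.mem_nhds h1N, inv_mem_nhds_one G (hN.mem_nhds h1N), hU_near]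
    with w hw hw_inv hwU
  exact mul_mem_unbalWitnesses hNV ⟨gy, hgxU, hgyU, hy, hx⟩ hw hw_inv hwU

end Witnesses

theorem stmt2_general {G : Type*} {X : Type*} [Group G] [TopologicalSpace G] [IsTopologicalGroup G]
    [PolishSpace G] [TopologicalSpace X] [MulAction G X] [ContinuousSMul G X]
    (x y : X) (hxy : Unbal G x y)
    (V : Set G) (hV : IsOpen V) (h1V : (1 : G) ∈ V)
    (U : Set X) (hU : IsOpen U) (hmem : x ∈ U ∨ y ∈ U) :
    ¬ IsMeagre {gx : G | ∃ gy : G, gx • x ∈ U ∧ gy • y ∈ U ∧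
        gy • y ∈ closure ((fun v : G => v • (gx • x)) '' V) ∧
        gx • x ∈ closure ((fun v : G => v • (gy • y)) '' V)} := by
  obtain ⟨g, hg⟩ := hxy.interior_unbalWitnesses_nonempty (hV.mem_nhds h1V) hU hmem
  exact fun h => not_isMeagre_of_isOpen isOpen_interior ⟨g, hg⟩ (h.mono interior_subset)

theorem stmt2 {G : Type*} {X : Type*} [Group G] [TopologicalSpace G] [IsTopologicalGroup G]
    [PolishSpace G] [TopologicalSpace X] [PolishSpace X] [MulAction G X] [ContinuousSMul G X]
    (x y : X) (hxy : Unbal G x y)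
    (V : Set G) (hV : IsOpen V) (h1V : (1 : G) ∈ V)
    (U : Set X) (hU : IsOpen U) (hUne : U.Nonempty) (hmem : x ∈ U ∨ y ∈ U) :
    ¬ IsMeagre {gx : G | ∃ gy : G, gx • x ∈ U ∧ gy • y ∈ U ∧
        gy • y ∈ closure ((fun v : G => v • (gx • x)) '' V) ∧
        gx • x ∈ closure ((fun v : G => v • (gy • y)) '' V)} :=
  stmt2_general x y hxy V hV h1V U hU hmem
end

section
/- For any Polish G-space X, any x, y, z ∈ X, open identity neighborhoods V, W ⊆ G, and ordinal α: if x ≾^α_V y and y ≾^α_W z, then x ≾^α_{VW} z. -/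
open scoped Pointwise

/-! Induction on `α`. At `α = 0` the relation is closure-transitive because each `v • ·` is
continuous. For `α > 0`, given `U`, pick `U₁` with `U₁ * U₁ ⊆ U`, take `v ∈ V` witnessing
`x ≾^α_V y` at `U₁`, and query `y ≾^α_W z` at the conjugate `v⁻¹ U₁ v`: translating its witness
`w` by `v` (the relation is equivariant once neighbourhoods are conjugated) gives
`(v * w) • z ≾^β_{U₁} v • y ≾^β_{U₁} x`, and the induction hypothesis concludes. -/

namespace BF

variable {G X : Type*} [Group G] [TopologicalSpace G] [TopologicalSpace X] [MulAction G X]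
  {α : Ordinal} {S T : Set G} {x y z : X}

theorem zero_iff : BF G 0 S x y ↔ x ∈ closure ((fun v : G => v • y) '' S) := by
  rw [BF, if_pos rfl]

theorem iff_of_ne_zero (hα : α ≠ 0) :
    BF G α S x y ↔ ∀ U : Set G, IsOpen U → (1 : G) ∈ U →
      ∃ v ∈ S, ∀ β < α, BF G β U (v • y) x := by
  rw [BF, if_neg hα]

theorem mono (h : BF G α S x y) (hST : S ⊆ T) : BF G α T x y := by
  rcases eq_or_ne α 0 with rfl | hα
  · rw [zero_iff] at h ⊢
    exact closure_mono (Set.image_mono hST) h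
  · rw [iff_of_ne_zero hα] at h ⊢
    intro U hU h1U
    obtain ⟨v, hv, hβ⟩ := h U hU h1U
    exact ⟨v, hST hv, hβ⟩

variable [ContinuousMul G] [ContinuousConstSMul G X]

theorem smul (g : G) (h : BF G α ((fun s => g * s * g⁻¹) ⁻¹' S) x y) :
    BF G α S (g • x) (g • y) := by
  induction α using WellFoundedLT.induction generalizing S x y with
  | _ α IH =>
  rcases eq_or_ne α 0 with rfl | hα
  · rw [zero_iff] at h ⊢
    refine map_mem_closure (continuous_const_smul g) h ?_
    rintro _ ⟨v, hv, rfl⟩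
    exact ⟨g * v * g⁻¹, hv, by simp [smul_smul]⟩
  · rw [iff_of_ne_zero hα] at h ⊢
    intro U hU h1U
    obtain ⟨v, hv, hβ⟩ := h ((fun s => g * s * g⁻¹) ⁻¹' U)
      (hU.preimage (by fun_prop)) (by simpa using h1U)
    refine ⟨g * v * g⁻¹, hv, fun β hβα => ?_⟩
    have hpt : g • v • y = (g * v * g⁻¹) • g • y := by simp [smul_smul]
    exact hpt ▸ IH β hβα (hβ β hβα)

theorem trans (h₁ : BF G α S x y) (h₂ : BF G α T y z) : BF G α (S * T) x z := by
  induction α using WellFoundedLT.induction generalizing S T x y z with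
  | _ α IH =>
  rcases eq_or_ne α 0 with rfl | hα
  · rw [zero_iff] at h₁ h₂ ⊢
    refine closure_minimal ?_ isClosed_closure h₁
    rintro _ ⟨v, hv, rfl⟩
    refine map_mem_closure (continuous_const_smul v) h₂ ?_
    rintro _ ⟨w, hw, rfl⟩
    exact ⟨v * w, Set.mul_mem_mul hv hw, mul_smul v w z⟩
  · rw [iff_of_ne_zero hα] at h₁ h₂ ⊢
    intro U hU h1U
    obtain ⟨U₁, hU₁, h1U₁, hU₁U⟩ := exists_open_nhds_one_mul_subset (hU.mem_nhds h1U)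
    obtain ⟨v, hv, hvy⟩ := h₁ U₁ hU₁ h1U₁
    obtain ⟨w, hw, hwz⟩ := h₂ ((fun s => v * s * v⁻¹) ⁻¹' U₁)
      (hU₁.preimage (by fun_prop)) (by simpa using h1U₁)
    refine ⟨v * w, Set.mul_mem_mul hv hw, fun β hβα => ?_⟩
    have hvwz : BF G β U₁ ((v * w) • z) (v • y) := mul_smul v w z ▸ (hwz β hβα).smul v
    exact (IH β hβα hvwz (hvy β hβα)).mono hU₁U

end BF

theorem stmt4_general {G : Type*} {X : Type*} [Group G] [TopologicalSpace G] [IsTopologicalGroup G]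
    [TopologicalSpace X] [MulAction G X] [ContinuousSMul G X]
    (x y z : X) (V W : Set G) (α : Ordinal)
    (h1 : BF G α V x y) (h2 : BF G α W y z) :
    BF G α (V * W) x z :=
  h1.trans h2

theorem stmt4 {G : Type*} {X : Type*} [Group G] [TopologicalSpace G] [IsTopologicalGroup G]
    [PolishSpace G] [TopologicalSpace X] [PolishSpace X] [MulAction G X] [ContinuousSMul G X]
    (x y z : X) (V W : Set G) (hV : IsOpen V) (h1V : (1 : G) ∈ V)
    (hW : IsOpen W) (h1W : (1 : G) ∈ W) (α : Ordinal)
    (h1 : BF G α V x y) (h2 : BF G α W y z) :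
    BF G α (V * W) x z :=
  stmt4_general x y z V W α h1 h2
end

section
/- Let G be a Polish group, X a Polish G-space, and V, W open identity neighborhoods with W² ⊆ V. If A ⊆ X is closed, x ≾^0_W y (i.e., x ∈ closure(W·y) in the symmetric-free base case of the back-and-forth relation), and y ∈ A^{*V}, then x ∈ A^{*W}. -/
open scoped Pointwise

/-! For closed `A` and open `V` the set `{g ∈ V | g • y ∉ A}` is open, so by the Baire category
theorem it is meagre only when it is empty: `y ∈ A^{*V}` just says `V • y ⊆ A`. Then, for
`g ∈ W`, `g • x ∈ g • closure (W • y) ⊆ closure ((W * W) • y) ⊆ closure (V • y) ⊆ A`, so the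
set witnessing `x ∉ A^{*W}` is even empty. -/

section VaughtStar

variable {G X : Type*} [Group G] [TopologicalSpace X] [MulAction G X]

theorem mem_vaughtStar_of_forall_smul_mem [TopologicalSpace G] {A : Set X} {V : Set G} {y : X}
    (h : ∀ v ∈ V, v • y ∈ A) : y ∈ VaughtStar G A V := by
  have hempty : {g ∈ V | g • y ∉ A} = ∅ :=
    Set.eq_empty_iff_forall_notMem.mpr fun g hg => hg.2 (h g hg.1)
  show IsMeagre _
  rw [hempty]
  exact IsMeagre.empty

theorem forall_smul_mem_of_mem_vaughtStar [TopologicalSpace G] [BaireSpace G]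
    [ContinuousSMul G X] {A : Set X} {V : Set G} {y : X} (hV : IsOpen V) (hA : IsClosed A)
    (hy : y ∈ VaughtStar G A V) : ∀ v ∈ V, v • y ∈ A := by
  have hopen : IsOpen {g ∈ V | g • y ∉ A} :=
    hV.inter (hA.isOpen_compl.preimage (continuous_id.smul continuous_const))
  by_contra! ⟨v, hvV, hvA⟩
  exact not_isMeagre_of_isOpen hopen ⟨v, hvV, hvA⟩ hy

theorem smul_mem_of_mem_closure_image_smul [ContinuousConstSMul G X] {A : Set X} {V W : Set G}
    {x y : X} (hA : IsClosed A) (hWV : W * W ⊆ V) (hx : x ∈ closure ((fun w : G => w • y) '' W))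
    (hVA : ∀ v ∈ V, v • y ∈ A) {g : G} (hg : g ∈ W) : g • x ∈ A := by
  have himage : (fun z : X => g • z) '' ((fun w : G => w • y) '' W) ⊆ A := by
    rintro _ ⟨_, ⟨w, hw, rfl⟩, rfl⟩
    simp only [← mul_smul]
    exact hVA _ (hWV (Set.mul_mem_mul hg hw))
  exact hA.closure_subset_iff.mpr himage
    (image_closure_subset_closure_image (continuous_const_smul g) ⟨x, hx, rfl⟩)

end VaughtStar

theorem stmt6_general {G : Type*} {X : Type*} [Group G] [TopologicalSpace G]
    [PolishSpace G] [TopologicalSpace X] [MulAction G X] [ContinuousSMul G X]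
    (x y : X) (V W : Set G) (hV : IsOpen V)
    (hWV : W * W ⊆ V)
    (A : Set X) (hA : IsClosed A)
    (h0 : BF G 0 W x y) (hyA : y ∈ VaughtStar G A V) :
    x ∈ VaughtStar G A W := by
  rw [BF, if_pos rfl] at h0
  exact mem_vaughtStar_of_forall_smul_mem fun g hg =>
    smul_mem_of_mem_closure_image_smul hA hWV h0
      (forall_smul_mem_of_mem_vaughtStar hV hA hyA) hg

theorem stmt6 {G : Type*} {X : Type*} [Group G] [TopologicalSpace G] [IsTopologicalGroup G]
    [PolishSpace G] [TopologicalSpace X] [PolishSpace X] [MulAction G X] [ContinuousSMul G X]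
    (x y : X) (V W : Set G) (hV : IsOpen V) (h1V : (1 : G) ∈ V)
    (hW : IsOpen W) (h1W : (1 : G) ∈ W) (hWV : W * W ⊆ V)
    (A : Set X) (hA : IsClosed A)
    (h0 : BF G 0 W x y) (hyA : y ∈ VaughtStar G A V) :
    x ∈ VaughtStar G A W :=
  stmt6_general x y V W hV hWV A hA h0 hyA
end

section
/- Let H be a TSI Polish group and Y a Polish H-space. If x ⤳ y (the unbalanced relation holds), then x ≾^1_H y. -/
/-! A two-sided invariant metric makes small balls around `1` conjugation invariant, so every
identity neighbourhood `W` contains an open `V ∋ 1` with `g⁻¹ V g ⊆ W` for all `g`. The unbalanced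
relation (with `U` the whole space) gives `gy • y ∈ closure (V • gx • x)`; translating by `gx⁻¹`
yields `(gx⁻¹ * gy) • y ∈ closure ((gx⁻¹ V gx) • x) ⊆ closure (W • x)`. -/

open Set
open scoped Pointwise

theorem BF_zero {G X : Type*} [Group G] [TopologicalSpace G] [TopologicalSpace X]
    [MulAction G X] (V : Set G) (x y : X) :
    BF G 0 V x y ↔ x ∈ closure ((fun v : G => v • y) '' V) := by
  rw [BF, if_pos rfl]

theorem BF_one_iff {G X : Type*} [Group G] [TopologicalSpace G] [TopologicalSpace X]
    [MulAction G X] (V : Set G) (x y : X) :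
    BF G 1 V x y ↔ ∀ W : Set G, IsOpen W → (1 : G) ∈ W →
      ∃ v ∈ V, v • y ∈ closure ((fun w : G => w • x) '' W) := by
  rw [BF, if_neg one_ne_zero]
  simp only [Order.lt_one_iff, forall_eq, BF_zero]

theorem conj_mem_ball_one {H : Type*} [Group H] [PseudoMetricSpace H]
    (hl : ∀ g h h' : H, dist (g * h) (g * h') = dist h h')
    (hr : ∀ g h h' : H, dist (h * g) (h' * g) = dist h h')
    {ε : ℝ} {v : H} (hv : v ∈ Metric.ball 1 ε) (g : H) :
    g⁻¹ * v * g ∈ Metric.ball 1 ε := by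
  have : dist (g⁻¹ * v * g) 1 = dist v 1 := by
    calc dist (g⁻¹ * v * g) 1 = dist (g⁻¹ * (v * g)) (g⁻¹ * (1 * g)) := by
          rw [mul_assoc, one_mul, inv_mul_cancel]
      _ = dist v 1 := by rw [hl, hr]
  rwa [Metric.mem_ball, this]

theorem IsTSI.exists_isOpen_conj_mem {H : Type*} [Group H] [TopologicalSpace H]
    (hTSI : IsTSI H) {W : Set H} (hW : IsOpen W) (hW1 : (1 : H) ∈ W) :
    ∃ V : Set H, IsOpen V ∧ (1 : H) ∈ V ∧ ∀ g, ∀ v ∈ V, g⁻¹ * v * g ∈ W := by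
  obtain ⟨m, rfl, hl, hr⟩ := hTSI
  obtain ⟨ε, hε, hball⟩ := Metric.isOpen_iff.mp hW 1 hW1
  exact ⟨Metric.ball 1 ε, Metric.isOpen_ball, Metric.mem_ball_self hε,
    fun g v hv => hball (conj_mem_ball_one hl hr hv g)⟩

theorem inv_smul_mem_closure_image_smul {G X : Type*} [Group G] [TopologicalSpace X]
    [MulAction G X] [ContinuousConstSMul G X] {V W : Set G} {g : G} {x z : X}
    (hVW : ∀ v ∈ V, g⁻¹ * v * g ∈ W)
    (hz : z ∈ closure ((fun v : G => v • (g • x)) '' V)) :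
    g⁻¹ • z ∈ closure ((fun w : G => w • x) '' W) := by
  have hz' : g⁻¹ • z ∈ closure (g⁻¹ • (fun v : G => v • (g • x)) '' V) :=
    smul_closure_subset _ _ (Set.smul_mem_smul_set hz)
  refine closure_mono ?_ hz'
  rintro _ ⟨_, ⟨v, hv, rfl⟩, rfl⟩
  exact ⟨g⁻¹ * v * g, hVW v hv, by simp only [mul_smul]⟩

theorem stmt10_general {H : Type*} {Y : Type*} [Group H] [TopologicalSpace H]
    [TopologicalSpace Y] [MulAction H Y] [ContinuousSMul H Y]
    (hTSI : IsTSI H) (x y : Y) (hxy : Unbal H x y) :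
    BF H 1 Set.univ x y := by
  rw [BF_one_iff]
  intro W hW hW1
  obtain ⟨V, hV, hV1, hconj⟩ := hTSI.exists_isOpen_conj_mem hW hW1
  obtain ⟨gx, gy, -, -, hgy, -⟩ := hxy V hV hV1 univ isOpen_univ (Or.inl trivial)
  refine ⟨gx⁻¹ * gy, trivial, ?_⟩
  rw [mul_smul]
  exact inv_smul_mem_closure_image_smul (hconj gx) hgy

theorem stmt10 {H : Type*} {Y : Type*} [Group H] [TopologicalSpace H] [IsTopologicalGroup H]
    [PolishSpace H] [TopologicalSpace Y] [PolishSpace Y] [MulAction H Y] [ContinuousSMul H Y]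
    (hTSI : IsTSI H) (x y : Y) (hxy : Unbal H x y) :
    BF H 1 Set.univ x y :=
  stmt10_general hTSI x y hxy
end

section
/- Let P ≤ S(N) be a closed permutation group on a countable set N in which all orbits are infinite. Then for a comeager set of bijections e : N → N × {0,1} (in the Polish space of such bijections with the pointwise convergence topology), for each i ∈ {0,1} and each finite A ⊆ N, there exists p ∈ P such that e(p·n) = (p·n, i) for all n ∈ A. -/
def PermTop (N : Type*) : TopologicalSpace (Equiv.Perm N) :=
  TopologicalSpace.induced (fun σ : Equiv.Perm N => (σ : N → N))
    (@Pi.topologicalSpace N (fun _ => N) (fun _ => ⊥))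

open Set MulAction Function
open scoped Pointwise

theorem MulAction.exists_smul_notMem_of_orbit_infinite {G X : Type*} [Group G] [MulAction G X]
    {A B : Set X} (hA : A.Finite) (hB : B.Finite) (horb : ∀ x ∈ A, (orbit G x).Infinite) :
    ∃ g : G, ∀ a ∈ A, g • a ∉ B := by
  by_contra! h
  -- then `G` is covered by finitely many cosets of the stabilizers of points of `A`,
  -- so by B. H. Neumann's lemma one of them has finite index
  let σ : X × X → G := fun k => Classical.epsilon fun g : G => g • k.1 = k.2
  have hcover : ⋃ k ∈ hA.toFinset ×ˢ hB.toFinset, σ k • (stabilizer G k.1 : Set G) = univ := by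
    refine eq_univ_of_forall fun g => ?_
    obtain ⟨a, ha, hga⟩ := h g
    have hσ : σ (a, g • a) • a = g • a :=
      Classical.epsilon_spec (p := fun g' : G => g' • a = g • a) ⟨g, rfl⟩
    refine mem_biUnion (x := (a, g • a)) (by simp [ha, hga]) ?_
    rw [mem_leftCoset_iff, SetLike.mem_coe, mem_stabilizer_iff, mul_smul, inv_smul_eq_iff, hσ]
  obtain ⟨k, hk, hfin⟩ := Subgroup.exists_finiteIndex_of_leftCoset_cover hcover
  refine horb k.1 (by simpa using (Finset.mem_product.1 hk).1) (finite_of_ncard_ne_zero ?_)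
  rw [← index_stabilizer]
  exact hfin.index_ne_zero

namespace Equiv

abbrev pointwiseTopology (α β : Type*) [TopologicalSpace β] : TopologicalSpace (α ≃ β) :=
  .induced (fun e : α ≃ β => (e : α → β)) Pi.topologicalSpace

attribute [local instance] pointwiseTopology

variable {α β : Type*}

theorem exists_eqOn_and_eqOn (e : α ≃ β) {f : α → β} {B C : Set α}
    (hB : B.Finite) (hf : InjOn f B) (hBC : Disjoint B C) (hfC : Disjoint (f '' B) (e '' C)) :
    ∃ e' : α ≃ β, EqOn e' e C ∧ EqOn e' f B := by
  classical
  -- post-compose with one transposition of `β` per point of `B`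
  induction B, hB using Set.Finite.induction_on generalizing e C with
  | empty => exact ⟨e, eqOn_refl _ _, eqOn_empty _ _⟩
  | @insert b B hbB _ ih =>
    rw [injOn_insert hbB] at hf
    rw [image_insert_eq, disjoint_insert_left] at hfC
    rw [disjoint_insert_left] at hBC
    let e₁ : α ≃ β := e.trans (swap (e b) (f b))
    have he₁C : EqOn e₁ e C := fun n hn => swap_apply_of_ne_of_ne
      (e.injective.ne (ne_of_mem_of_not_mem hn hBC.1)) (fun h => hfC.1 ⟨n, hn, h⟩)
    have he₁b : e₁ b = f b := swap_apply_left (e b) (f b)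
    obtain ⟨e', he'C, he'B⟩ := ih e₁ (C := insert b C) hf.1
      (disjoint_insert_right.2 ⟨hbB, hBC.2⟩)
      (by
        rw [image_insert_eq, he₁C.image_eq, he₁b, disjoint_insert_right]
        exact ⟨hf.2, hfC.2⟩)
    refine ⟨e', fun n hn => (he'C (mem_insert_of_mem b hn)).trans (he₁C hn), ?_⟩
    rw [← singleton_union, eqOn_union, eqOn_singleton]
    exact ⟨(he'C (mem_insert b C)).trans he₁b, he'B⟩

variable [TopologicalSpace β]

theorem isOpen_setOf_eqOn [DiscreteTopology β] (f : α → β) {F : Set α} (hF : F.Finite) :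
    IsOpen {e : α ≃ β | EqOn e f F} :=
  isOpen_induced (isOpen_set_pi hF fun n _ => isOpen_discrete {f n})

theorem exists_finite_setOf_eqOn_subset {U : Set (α ≃ β)} (hU : IsOpen U) {e : α ≃ β}
    (he : e ∈ U) : ∃ I : Set α, I.Finite ∧ {e' : α ≃ β | EqOn e' e I} ⊆ U := by
  obtain ⟨V, hV, rfl⟩ := isOpen_induced_iff.1 hU
  obtain ⟨I, u, hu, huV⟩ := isOpen_pi_iff.1 hV e he
  refine ⟨I, I.finite_toSet, fun e' he' => huV fun n hn => ?_⟩
  simpa only [he' hn] using (hu n hn).2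

theorem isOpen_setOf_exists_eqOn_smul [DiscreteTopology β] {G : Type*} [SMul G α] (f : α → β)
    {F : Set α} (hF : F.Finite) : IsOpen {e : α ≃ β | ∃ g : G, EqOn e f (g • F)} := by
  simp only [ofPred_exists]
  exact isOpen_iUnion fun g => isOpen_setOf_eqOn f hF.smul_set

theorem dense_setOf_exists_eqOn_smul {G : Type*} [Group G] [MulAction G α] {f : α → β}
    (hf : Injective f) {F : Set α} (hF : F.Finite) (horb : ∀ x ∈ F, (orbit G x).Infinite) :
    Dense {e : α ≃ β | ∃ g : G, EqOn e f (g • F)} := by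
  refine dense_iff_inter_open.2 fun U hU ⟨e, he⟩ => ?_
  obtain ⟨I, hI, hIU⟩ := exists_finite_setOf_eqOn_subset hU he
  obtain ⟨g, hg⟩ := exists_smul_notMem_of_orbit_infinite hF
    (hI.union ((hI.image e).preimage hf.injOn)) horb
  have hgI : Disjoint (g • F) I :=
    disjoint_left.2 <| by
      rintro _ ⟨a, ha, rfl⟩ hgaI
      exact hg a ha (Or.inl hgaI)
  have hgeI : Disjoint (f '' (g • F)) (e '' I) :=
    disjoint_left.2 <| by
      rintro _ ⟨_, ⟨a, ha, rfl⟩, rfl⟩ heI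
      exact hg a ha (Or.inr heI)
  obtain ⟨e', he'I, he'F⟩ := e.exists_eqOn_and_eqOn hF.smul_set hf.injOn hgI hgeI
  exact ⟨e', hIU he'I, g, he'F⟩

end Equiv

theorem stmt14_general {N : Type*} [Countable N]
    (P : Subgroup (Equiv.Perm N))
    (horb : ∀ n : N, {m : N | ∃ p ∈ P, p n = m}.Infinite) :
    {e : N ≃ N × Bool | ∀ (i : Bool) (A : Set N), A.Finite →
        ∃ p ∈ P, ∀ n ∈ A, e (p n) = (p n, i)} ∈
      @residual (N ≃ N × Bool)
        (TopologicalSpace.induced (fun e : N ≃ N × Bool => (⇑e : N → N × Bool))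
          (@Pi.topologicalSpace N (fun _ => N × Bool) (fun _ => ⊥))) := by
  let _ : TopologicalSpace (N × Bool) := ⊥
  have : DiscreteTopology (N × Bool) := ⟨rfl⟩
  let _ := Equiv.pointwiseTopology N (N × Bool)
  have horbP (n : N) : (orbit P n).Infinite :=
    (horb n).mono <| by rintro _ ⟨p, hp, rfl⟩; exact ⟨⟨p, hp⟩, rfl⟩
  have hresidual (i : Bool) (F : Finset N) :
      {e : N ≃ N × Bool | ∃ p : P, EqOn e (·, i) (p • (F : Set N))} ∈ residual _ :=
    residual_of_dense_open (Equiv.isOpen_setOf_exists_eqOn_smul _ F.finite_toSet)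
      (Equiv.dense_setOf_exists_eqOn_smul (Prod.mk_left_injective i)
        F.finite_toSet fun n _ => horbP n)
  filter_upwards [countable_iInter_mem.2 fun q : Bool × Finset N => hresidual q.1 q.2]
    with e he i A hA
  obtain ⟨p, hp⟩ := mem_iInter.1 he (i, hA.toFinset)
  exact ⟨p, p.2, fun n hn => hp (smul_mem_smul_set (hA.mem_toFinset.2 hn))⟩

theorem stmt14 {N : Type*} [Countable N]
    (P : Subgroup (Equiv.Perm N))
    (hPcl : @IsClosed _ (PermTop N) (P : Set (Equiv.Perm N)))
    (horb : ∀ n : N, {m : N | ∃ p ∈ P, p n = m}.Infinite) :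
    {e : N ≃ N × Bool | ∀ (i : Bool) (A : Set N), A.Finite →
        ∃ p ∈ P, ∀ n ∈ A, e (p n) = (p n, i)} ∈
      @residual (N ≃ N × Bool)
        (TopologicalSpace.induced (fun e : N ≃ N × Bool => (⇑e : N → N × Bool))
          (@Pi.topologicalSpace N (fun _ => N × Bool) (fun _ => ⊥))) :=
  stmt14_general P horb
end

section
/- The Wreath product of two CLI Polish groups is CLI: if P is a closed subgroup of S(N) for a countable set N and G is a CLI Polish group, and P is CLI, then the semidirect product P ⋉_φ G^N (where P acts on G^N by permuting coordinates) is a CLI Polish group. -/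
def permShift (N : Type*) (G : Type*) [Group G] : Equiv.Perm N →* MulAut (N → G) where
  toFun p :=
    { toFun := fun g => fun n => g (p⁻¹ n),
      invFun := fun g => fun n => g (p n),
      left_inv := fun g => by funext n; simp,
      right_inv := fun g => by funext n; simp,
      map_mul' := fun g h => rfl }
  map_one' := by
    apply MulEquiv.toEquiv_injective; apply Equiv.ext; intro g; funext n; simp
  map_mul' p q := by
    apply MulEquiv.toEquiv_injective; apply Equiv.ext; intro g; funext n
    simp [Equiv.Perm.mul_apply]

/-!
Send `(g, p)` to `(p, n ↦ (p n, g (p n)))`, recording `p n` in `ℕ` through an encoding of `N`.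
This is a closed embedding into `P × (N → ℕ × G)`, which is complete for the metric
`max d_P (∑ₙ min 2⁻ⁿ d_{ℕ × G})`. Left multiplication by `(h, q)` acts on the `n`-th coordinate
as `(m, a) ↦ (q m, h (q m) * a)`: when two points agree in the first coordinate, left invariance
of `d_G` preserves their distance; when they differ, the `ℕ`-distance is at least `1`, so the
truncation at `2⁻ⁿ` hides the `G`-part. Hence the pulled-back complete metric is left-invariant.
-/
open Function Topology Equiv Encodable

theorem isCLI_of_isClosedEmbedding {H X : Type*} [Group H] [TopologicalSpace H]
    [MetricSpace X] [CompleteSpace X] {f : H → X} (hf : IsClosedEmbedding f)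
    (hf_mul : ∀ g x y : H, dist (f (g * x)) (f (g * y)) = dist (f x) (f y)) : IsCLI H := by
  let : MetricSpace H := hf.isEmbedding.comapMetricSpace f
  refine ⟨_, rfl, hf_mul, ?_⟩
  rw [completeSpace_iff_isComplete_range
    (Isometry.of_dist_eq (f := f) fun _ _ => rfl).isUniformInducing]
  exact hf.isClosed_range.isComplete

theorem Continuous.apply_of_discreteTopology {X N Y : Type*} [TopologicalSpace X]
    [TopologicalSpace N] [DiscreteTopology N] [TopologicalSpace Y] {f : X → N → Y} {k : X → N}
    (hf : Continuous f) (hk : Continuous k) : Continuous fun x => f x (k x) := by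
  refine continuous_iff_continuousAt.2 fun x => ?_
  have hk_const : ∀ᶠ y in 𝓝 x, k y = k x :=
    hk.continuousAt ((isOpen_discrete {k x}).mem_nhds (Set.mem_singleton _))
  exact ((continuous_apply (k x)).comp hf).continuousAt.congr
    (hk_const.mono fun y hy => by simp [hy])

theorem continuous_perm_inv_apply {X N : Type*} [TopologicalSpace X] [TopologicalSpace N]
    [DiscreteTopology N] {f : X → Perm N} (hf : ∀ n, Continuous fun x => f x n) (n : N) :
    Continuous fun x => (f x)⁻¹ n := by
  refine continuous_discrete_rng.2 fun k => ?_
  have : (fun x => (f x)⁻¹ n) ⁻¹' {k} = (fun x => f x k) ⁻¹' {n} := by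
    ext x; simp [Equiv.eq_symm_apply, eq_comm]
  exact this ▸ (isOpen_discrete _).preimage (hf k)

theorem min_dist_nat_prod {G : Type*} [PseudoMetricSpace G] {c : ℝ} (hc : c ≤ 1) (a b : ℕ)
    (u v : G) : min c (dist (a, u) (b, v)) = if a = b then min c (dist u v) else c := by
  rw [Prod.dist_eq]
  split_ifs with hab
  · simp [hab]
  · exact min_eq_left (hc.trans ((Nat.pairwise_one_le_dist hab).trans (le_max_left _ _)))

abbrev WreathProduct (N G : Type*) [Group G] (P : Subgroup (Perm N)) :=
  SemidirectProduct (N → G) P ((permShift N G).comp P.subtype)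

namespace WreathProduct

variable {N G : Type*} [Group G] {P : Subgroup (Perm N)}

theorem mul_left_apply (x y : WreathProduct N G P) (n : N) :
    (x * y).left n = x.left n * y.left ((x.right : Perm N)⁻¹ n) := rfl

theorem mul_right_apply (x y : WreathProduct N G P) (n : N) :
    ((x * y).right : Perm N) n = (x.right : Perm N) ((y.right : Perm N) n) := rfl

def ofEmbed (y : P × (N → ℕ × G)) : WreathProduct N G P :=
  ⟨fun m => (y.2 ((y.1 : Perm N)⁻¹ m)).2, y.1⟩

section Topology

variable [TopologicalSpace N] [DiscreteTopology N] [TopologicalSpace G] [TopologicalSpace P]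

instance : TopologicalSpace (WreathProduct N G P) :=
  .induced (fun x => (x.left, x.right)) inferInstance

theorem continuous_ofEmbed (hcont : ∀ n, Continuous fun p : P => (p : Perm N) n) :
    Continuous (ofEmbed : P × (N → ℕ × G) → WreathProduct N G P) := by
  refine continuous_induced_rng.2 (Continuous.prodMk (continuous_pi fun m => ?_) continuous_fst)
  exact continuous_snd.comp <| continuous_snd.apply_of_discreteTopology <|
    (continuous_perm_inv_apply hcont m).comp continuous_fst

end Topology

variable [Encodable N]

def embed (x : WreathProduct N G P) : P × (N → ℕ × G) :=
  (x.right, fun n => (encode ((x.right : Perm N) n), x.left ((x.right : Perm N) n)))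

theorem leftInverse_ofEmbed_embed : LeftInverse (ofEmbed (G := G) (P := P)) embed := by
  intro x
  ext m <;> simp [embed, ofEmbed]

section Topology

variable [TopologicalSpace N] [DiscreteTopology N] [TopologicalSpace G] [TopologicalSpace P]

theorem continuous_embed (hcont : ∀ n, Continuous fun p : P => (p : Perm N) n) :
    Continuous (embed : WreathProduct N G P → P × (N → ℕ × G)) := by
  have hpair : Continuous fun x : WreathProduct N G P => (x.left, x.right) :=
    continuous_induced_dom
  refine hpair.snd.prodMk (continuous_pi fun n => ?_)
  have hn := (hcont n).comp hpair.snd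
  exact (continuous_of_discreteTopology.comp hn).prodMk (hpair.fst.apply_of_discreteTopology hn)

theorem isClosedEmbedding_embed [T2Space G] [T2Space P]
    (hcont : ∀ n, Continuous fun p : P => (p : Perm N) n) :
    IsClosedEmbedding (embed : WreathProduct N G P → P × (N → ℕ × G)) :=
  leftInverse_ofEmbed_embed.isClosedEmbedding (continuous_ofEmbed hcont) (continuous_embed hcont)

end Topology

open scoped PiCountable in
theorem dist_embed_mul [MetricSpace G] [MetricSpace P]
    (hG : ∀ g h h' : G, dist (g * h) (g * h') = dist h h')
    (hP : ∀ p q r : P, dist (p * q) (p * r) = dist q r) (z x y : WreathProduct N G P) :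
    dist (embed (z * x)) (embed (z * y)) = dist (embed x) (embed y) := by
  rw [Prod.dist_eq, Prod.dist_eq]
  congr 1
  · exact hP z.right x.right y.right
  simp only [embed, PiCountable.dist_eq_tsum]
  refine tsum_congr fun n => ?_
  have hc : (2⁻¹ : ℝ) ^ encode n ≤ 1 := pow_le_one₀ (by norm_num) (by norm_num)
  rw [min_dist_nat_prod hc, min_dist_nat_prod hc]
  by_cases h : (x.right : Perm N) n = (y.right : Perm N) n
  · simp only [mul_left_apply, mul_right_apply, h, Perm.coe_inv, symm_apply_apply, hG, if_true]
  · simp [h]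

end WreathProduct

theorem isCLI_wreathProduct {N G : Type*} [Encodable N] [TopologicalSpace N] [DiscreteTopology N]
    [Group G] [MetricSpace G] [CompleteSpace G]
    (hG : ∀ g h h' : G, dist (g * h) (g * h') = dist h h')
    {P : Subgroup (Perm N)} [MetricSpace P] [CompleteSpace P]
    (hP : ∀ p q r : P, dist (p * q) (p * r) = dist q r)
    (hcont : ∀ n, Continuous fun p : P => (p : Perm N) n) :
    IsCLI (WreathProduct N G P) := by
  let : MetricSpace (N → ℕ × G) := PiCountable.metricSpace
  -- `PiCountable.metricSpace` carries the product uniformity by definition.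
  have : CompleteSpace (N → ℕ × G) := Pi.complete _
  exact isCLI_of_isClosedEmbedding (WreathProduct.isClosedEmbedding_embed hcont)
    (WreathProduct.dist_embed_mul hG hP)

theorem stmt16_general {N : Type*} [Countable N] {G : Type*} [Group G] [TopologicalSpace G]
    (hG : IsCLI G)
    (P : Subgroup (Equiv.Perm N))
    (hP : @IsCLI P _ (@instTopologicalSpaceSubtype (Equiv.Perm N) (· ∈ P) (PermTop N))) :
    @IsCLI (SemidirectProduct (N → G) P ((permShift N G).comp P.subtype)) _
      (TopologicalSpace.induced
        (fun x : SemidirectProduct (N → G) P ((permShift N G).comp P.subtype) =>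
          (x.left, x.right))
        (@instTopologicalSpaceProd (N → G) P Pi.topologicalSpace
          (@instTopologicalSpaceSubtype (Equiv.Perm N) (· ∈ P) (PermTop N)))) := by
  obtain ⟨mG, rfl, hG_mul, hG_complete⟩ := hG
  obtain ⟨mP, hmP, hP_mul, hP_complete⟩ := hP
  let : Encodable N := Encodable.ofCountable N
  let : TopologicalSpace N := ⊥
  have : DiscreteTopology N := ⟨rfl⟩
  let : TopologicalSpace (Perm N) := PermTop N
  have hcont (n : N) : Continuous[mP.toUniformSpace.toTopologicalSpace, ⊥]
      fun p : P => (p : Perm N) n := by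
    rw [hmP]
    exact ((continuous_apply n).comp continuous_induced_dom).comp continuous_subtype_val
  rw [← hmP]
  exact isCLI_wreathProduct hG_mul hP_mul hcont

theorem stmt16 {N : Type*} [Countable N] {G : Type*} [Group G] [TopologicalSpace G]
    [IsTopologicalGroup G] [PolishSpace G] (hG : IsCLI G)
    (P : Subgroup (Equiv.Perm N))
    (hPcl : @IsClosed _ (PermTop N) (P : Set (Equiv.Perm N)))
    (hP : @IsCLI P _ (@instTopologicalSpaceSubtype (Equiv.Perm N) (· ∈ P) (PermTop N))) :
    @IsCLI (SemidirectProduct (N → G) P ((permShift N G).comp P.subtype)) _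
      (TopologicalSpace.induced
        (fun x : SemidirectProduct (N → G) P ((permShift N G).comp P.subtype) =>
          (x.left, x.right))
        (@instTopologicalSpaceProd (N → G) P Pi.topologicalSpace
          (@instTopologicalSpaceSubtype (Equiv.Perm N) (· ∈ P) (PermTop N)))) :=
  stmt16_general hG P hP
end
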